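/- Let B be a Banach space and M a closed subspace of B which is complemented, i.e. there exists a bounded linear projection from B onto M. If B is a dual Banach space and M is weak*-closed in B, then the infimum defining the projection constant λ(M,B) is attained: there exists a bounded linear projection P : B → M onto M with ‖P‖ = λ(M,B). -/

import Mathlib

open scoped ENNReal

/-- The projection constant `λ(M, B)` of a subset `M` of a normed space `B`:
the infimum of `‖P‖` over all bounded linear projections `P : B → B` whose range lies in `M`
and which restrict to the identity on `M` (i.e. projections from `B` onto `M`);
it equals `∞` when no such projection exists. -/
noncomputable def projConst {B : Type*} [NormedAddCommGroup B] [NormedSpace ℂ B]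
    (M : Set B) : ℝ≥0∞ :=
  ⨅ P : {P : B →L[ℂ] B // (∀ x, P x ∈ M) ∧ ∀ x ∈ M, P x = x}, (‖P.1‖₊ : ℝ≥0∞)

/-!
Operators `B →L X*` sit injectively in the product `B → (X*, weak*)`. By Banach–Alaoglu in each
coordinate, the operators of norm `≤ r` form a compact subset of that product, and when `M` is
weak*-closed so do the projections onto `M` of norm `≤ r`. Compact sublevel sets force the norm
to attain its infimum on the projections onto `M`.
-/

open scoped NNReal
open Function Metric Set

theorem exists_isMinOn_of_isCompact_image_sublevel {α β Y : Type*} [LinearOrder β]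
    [TopologicalSpace Y] [T2Space Y] {Φ : α → Y} (hΦ : Injective Φ) {f : α → β} {S : Set α}
    (hS : S.Nonempty) (hK : ∀ b ∈ S, IsCompact (Φ '' {a ∈ S | f a ≤ f b})) :
    ∃ a ∈ S, IsMinOn f S a := by
  have : Nonempty S := hS.to_subtype
  let K : S → Set Y := fun b => Φ '' {a ∈ S | f a ≤ f b}
  have hdir : Directed (· ⊇ ·) K :=
    Directed.mono_comp (· ≥ ·) (g := fun r => Φ '' {a ∈ S | f a ≤ r})
      (fun _ _ h => image_mono fun _ ha => ⟨ha.1, ha.2.trans h⟩)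
      (Std.Total.directed fun b : S => f b)
  obtain ⟨y, hy⟩ := IsCompact.nonempty_iInter_of_directed_nonempty_isCompact_isClosed K hdir
    (fun b => ⟨Φ b, b, ⟨b.2, le_rfl⟩, rfl⟩) (fun b => hK b b.2) (fun b => (hK b b.2).isClosed)
  obtain ⟨a, ⟨haS, -⟩, rfl⟩ := mem_iInter.1 hy ⟨_, hS.some_mem⟩
  refine ⟨a, haS, fun b hb => ?_⟩
  obtain ⟨a', ⟨-, ha'b⟩, ha'a⟩ := mem_iInter.1 hy ⟨b, hb⟩
  exact hΦ ha'a ▸ ha'b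

section WeakStar

variable {𝕜 E X : Type*} [NontriviallyNormedField 𝕜]
  [NormedAddCommGroup E] [NormedSpace 𝕜 E] [NormedAddCommGroup X] [NormedSpace 𝕜 X]

variable (𝕜) in
def projectionsOnto {B : Type*} [NormedAddCommGroup B] [NormedSpace 𝕜 B] (M : Set B) :
    Set (B →L[𝕜] B) :=
  {P | (∀ x, P x ∈ M) ∧ ∀ x ∈ M, P x = x}

namespace ContinuousLinearMap

noncomputable def toWeakDualFun (P : E →L[𝕜] StrongDual 𝕜 X) : E → WeakDual 𝕜 X :=
  fun x => StrongDual.toWeakDual (P x)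

theorem toWeakDualFun_injective :
    Injective (toWeakDualFun : (E →L[𝕜] StrongDual 𝕜 X) → E → WeakDual 𝕜 X) :=
  fun _ _ h => ext fun x => congrFun h x

theorem isCompact_image_toWeakDualFun_closedBall [ProperSpace 𝕜] (r : ℝ) :
    IsCompact (toWeakDualFun '' closedBall (0 : E →L[𝕜] StrongDual 𝕜 X) r) := by
  rcases lt_or_ge r 0 with hr | hr
  · simp [closedBall_eq_empty.2 hr]
  have himage : toWeakDualFun '' closedBall (0 : E →L[𝕜] StrongDual 𝕜 X) r =
      range ((↑) : (E →ₗ[𝕜] WeakDual 𝕜 X) → E → WeakDual 𝕜 X) ∩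
        univ.pi fun x => WeakDual.toStrongDual ⁻¹' closedBall 0 (r * ‖x‖) := by
    ext g
    constructor
    · rintro ⟨P, hP, rfl⟩
      refine ⟨⟨StrongDual.toWeakDual.toLinearMap ∘ₗ P.toLinearMap, rfl⟩, fun x _ => ?_⟩
      simpa [toWeakDualFun] using P.le_of_opNorm_le (mem_closedBall_zero_iff.1 hP) x
    · rintro ⟨⟨L, rfl⟩, hL⟩
      have hbound (x : E) : ‖WeakDual.toStrongDual.toLinearMap ∘ₗ L <| x‖ ≤ r * ‖x‖ := by
        simpa using mem_univ_pi.1 hL x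
      exact ⟨LinearMap.mkContinuous _ r hbound,
        mem_closedBall_zero_iff.2 (LinearMap.mkContinuous_norm_le _ hr hbound), rfl⟩
  rw [himage]
  exact (isCompact_univ_pi fun x => WeakDual.isCompact_closedBall 0 _).inter_left
    (LinearMap.isClosed_range_coe _ _ _)

theorem isCompact_image_toWeakDualFun_projectionsOnto [ProperSpace 𝕜] {M : Set (StrongDual 𝕜 X)}
    (hM : IsClosed (StrongDual.toWeakDual '' M)) (r : ℝ≥0) :
    IsCompact (toWeakDualFun '' {P ∈ projectionsOnto 𝕜 M | ‖P‖₊ ≤ r}) := by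
  let C : Set (StrongDual 𝕜 X → WeakDual 𝕜 X) :=
    {g | (∀ x, g x ∈ StrongDual.toWeakDual '' M) ∧ ∀ x ∈ M, g x = StrongDual.toWeakDual x}
  have hC : IsClosed C := by
    simp only [C, ofPred_and, ofPred_forall]
    exact (isClosed_iInter fun x => hM.preimage (continuous_apply x)).inter
      (isClosed_iInter fun x => isClosed_iInter fun _ =>
        isClosed_eq (continuous_apply x) continuous_const)
  have hsublevel : {P ∈ projectionsOnto 𝕜 M | ‖P‖₊ ≤ r} =
      closedBall 0 r ∩ toWeakDualFun ⁻¹' C := by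
    ext P
    simp [projectionsOnto, C, toWeakDualFun, and_comm, ← NNReal.coe_le_coe]
  rw [hsublevel, image_inter_preimage]
  exact (isCompact_image_toWeakDualFun_closedBall (r : ℝ)).inter_right hC

theorem exists_isMinOn_nnnorm_projectionsOnto [ProperSpace 𝕜] {M : Set (StrongDual 𝕜 X)}
    (hM : IsClosed (StrongDual.toWeakDual '' M)) (hne : (projectionsOnto 𝕜 M).Nonempty) :
    ∃ P ∈ projectionsOnto 𝕜 M, IsMinOn (‖·‖₊) (projectionsOnto 𝕜 M) P :=
  exists_isMinOn_of_isCompact_image_sublevel toWeakDualFun_injective hne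
    fun Q _ => isCompact_image_toWeakDualFun_projectionsOnto hM ‖Q‖₊

end ContinuousLinearMap

end WeakStar

/-- If `B = X*` is a dual Banach space and `M` is a weak*-closed subspace of `B` which is
complemented (there is a bounded linear projection from `B` onto `M`), then the infimum
defining `λ(M,B)` is attained: there is a bounded linear projection `P` from `B` onto `M` with
`‖P‖ = λ(M,B)`. -/
theorem attained_projection_constant {X : Type*} [NormedAddCommGroup X] [NormedSpace ℂ X]
    (M : Submodule ℂ (StrongDual ℂ X))
    (hM : IsClosed (StrongDual.toWeakDual '' (M : Set (StrongDual ℂ X))))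
    (hcompl : ∃ P : StrongDual ℂ X →L[ℂ] StrongDual ℂ X,
      (∀ x, P x ∈ M) ∧ ∀ x ∈ M, P x = x) :
    ∃ P : StrongDual ℂ X →L[ℂ] StrongDual ℂ X,
      (∀ x, P x ∈ M) ∧ (∀ x ∈ M, P x = x) ∧
        (‖P‖₊ : ℝ≥0∞) = projConst (M : Set (StrongDual ℂ X)) := by
  obtain ⟨P, hP, hmin⟩ :=
    ContinuousLinearMap.exists_isMinOn_nnnorm_projectionsOnto hM hcompl
  refine ⟨P, hP.1, hP.2, le_antisymm ?_ ?_⟩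
  · exact le_iInf fun Q => ENNReal.coe_le_coe.2 (hmin Q.2)
  · exact iInf_le (fun Q : projectionsOnto ℂ (M : Set (StrongDual ℂ X)) => (‖Q.1‖₊ : ℝ≥0∞))
      ⟨P, hP⟩
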